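/- The diffusion matrix is tangential to the sphere: let R : ℝ^d → ℝ be a C² function such that for each unit vector k̂ the functions s ↦ ∂²R(sk̂)/∂x_n∂x_m are integrable on ℝ and ∂R(sk̂)/∂x_n → 0 as s → ±∞ for all n. Define, for k ∈ ℝ^d∖{0}, D_{mn}(k) := −(1/2) ∫_{−∞}^{∞} ∂²R(sk)/∂x_n∂x_m ds. Then for every k ≠ 0 and every n, Σ_{m=1}^{d} D_{nm}(k) k_m = 0; i.e., k lies in the kernel of the matrix D(k). -/

import Mathlib

noncomputable section

open MeasureTheory Real Filter Topology

abbrev Ed (d : ℕ) : Type := EuclideanSpace ℝ (Fin d)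

/-- Partial derivative of `f` in the `i`-th coordinate direction. -/
def pd {d : ℕ} (f : Ed d → ℝ) (i : Fin d) (x : Ed d) : ℝ :=
  fderiv ℝ f x (EuclideanSpace.single i 1)

/-- Laplacian of `f`. -/
def lap {d : ℕ} (f : Ed d → ℝ) (x : Ed d) : ℝ := ∑ i, pd (pd f i) i x

/-- The σ-algebra generated by the random field `F` observed at points of `s`. -/
def sigmaField {d : ℕ} {Ω : Type*} (F : Ed d → Ω → ℝ × ℝ) (s : Set (Ed d)) :
    MeasurableSpace Ω :=
  ⨆ x ∈ s, MeasurableSpace.comap (F x) inferInstance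

/-- The uniform mixing coefficient `φ(ρ)`. -/
def mixingCoeff {d : ℕ} {Ω : Type*} [MeasurableSpace Ω] (P : Measure Ω)
    (F : Ed d → Ω → ℝ × ℝ) (ρ : ℝ) : ℝ :=
  sSup { c : ℝ | ∃ R : ℝ, 0 < R ∧ ∃ A B : Set Ω,
    MeasurableSet[sigmaField F {x : Ed d | ‖x‖ ≤ R}] A ∧
    MeasurableSet[sigmaField F {x : Ed d | R + ρ ≤ ‖x‖}] B ∧
    P A ≠ 0 ∧ c = |(P B).toReal - (P (B ∩ A)).toReal / (P A).toReal| }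

/-- `φ(ρ)` decays faster than any power of `ρ`. -/
def rapidMixing {d : ℕ} {Ω : Type*} [MeasurableSpace Ω] (P : Measure Ω)
    (F : Ed d → Ω → ℝ × ℝ) : Prop :=
  ∀ p : ℝ, 0 < p → ∃ h : ℝ, ∀ ρ : ℝ, 0 ≤ ρ → ρ ^ p * mixingCoeff P F ρ ≤ h

/-- A jointly stationary mean-zero random field `F = (V,S)` with a.s. `C²`,
uniformly bounded realizations. -/
structure RandomField (d : ℕ) (Ω : Type*) [MeasurableSpace Ω] (P : Measure Ω) where
  V : Ed d → Ω → ℝ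
  S : Ed d → Ω → ℝ
  meas : ∀ x, Measurable fun ω => (V x ω, S x ω)
  stationary : ∀ (n : ℕ) (xs : Fin n → Ed d) (y : Ed d),
    Measure.map (fun ω (i : Fin n) => (V (xs i + y) ω, S (xs i + y) ω)) P
      = Measure.map (fun ω (i : Fin n) => (V (xs i) ω, S (xs i) ω)) P
  meanZero : ∀ x, (∫ ω, V x ω ∂P) = 0 ∧ (∫ ω, S x ω ∂P) = 0
  Mbd : ℝ
  smooth : ∀ᵐ ω ∂P, ContDiff ℝ 2 (fun x => V x ω) ∧ ContDiff ℝ 2 (fun x => S x ω)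
  derivBound : ∀ᵐ ω ∂P, ∀ (x : Ed d) (i : ℕ), i ≤ 2 →
    ‖iteratedFDeriv ℝ i (fun y => V y ω) x‖ ≤ Mbd ∧
    ‖iteratedFDeriv ℝ i (fun y => S y ω) x‖ ≤ Mbd

/-- Two-point correlation function `x ↦ 𝔼[f(0) g(x)]`. -/
def corr {d : ℕ} {Ω : Type*} [MeasurableSpace Ω] (P : Measure Ω)
    (f g : Ed d → Ω → ℝ) (x : Ed d) : ℝ := ∫ ω, f 0 ω * g x ω ∂P

/-- The correlation function is `C^∞` and rapidly decaying together with its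
derivatives up to order 4. -/
def corrRegular {d : ℕ} (R : Ed d → ℝ) : Prop :=
  ContDiff ℝ (⊤ : ℕ∞) R ∧ ∀ p : ℝ, 0 < p → ∃ C : ℝ, ∀ i : ℕ, i ≤ 4 → ∀ x : Ed d,
    (1 + ‖x‖) ^ p * ‖iteratedFDeriv ℝ i R x‖ ≤ C

/-- Power spectrum (Fourier transform) of `R`. -/
def powerSpectrum {d : ℕ} (R : Ed d → ℝ) (k : Ed d) : ℂ :=
  ∫ x : Ed d, (R x : ℂ) * Complex.exp (-Complex.I * ((inner ℝ x k : ℝ) : ℂ))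

/-- The power spectrum does not vanish identically on any hyperplane through the origin. -/
def noHyperplaneVanishing {d : ℕ} (R : Ed d → ℝ) : Prop :=
  ∀ p : Ed d, p ≠ 0 → ∃ k : Ed d, (inner ℝ k p : ℝ) = 0 ∧ powerSpectrum R k ≠ 0

/-- The random characteristics of the Liouville equation, with phase. -/
def Traj {d : ℕ} (Vf Sf : Ed d → ℝ) (δ : ℝ) (x k : Ed d) (z : ℝ)
    (X K : ℝ → Ed d) (Z : ℝ → ℝ) : Prop :=
  X 0 = x ∧ K 0 = k ∧ Z 0 = z ∧
  (∀ t, HasDerivAt X (-K t) t) ∧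
  (∀ t, HasDerivAt K (δ ^ (-(1:ℝ)/2) • gradient Vf (δ⁻¹ • X t)) t) ∧
  (∀ t, HasDerivAt Z (δ ^ (-(1:ℝ)/2) * Sf (δ⁻¹ • X t)) t)

/-- The random characteristics, without phase. -/
def TrajXK {d : ℕ} (Vf : Ed d → ℝ) (δ : ℝ) (x k : Ed d) (X K : ℝ → Ed d) : Prop :=
  X 0 = x ∧ K 0 = k ∧ (∀ t, HasDerivAt X (-K t) t) ∧
  (∀ t, HasDerivAt K (δ ^ (-(1:ℝ)/2) • gradient Vf (δ⁻¹ • X t)) t)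

abbrev Qd (d : ℕ) : Type := Ed d × Ed d × ℝ

def exd {d : ℕ} (i : Fin d) : Qd d := (EuclideanSpace.single i 1, 0, 0)
def ekd {d : ℕ} (i : Fin d) : Qd d := (0, EuclideanSpace.single i 1, 0)
def ezd {d : ℕ} : Qd d := (0, 0, 1)

/-- First directional derivative. -/
def D1 {X : Type*} [NormedAddCommGroup X] [NormedSpace ℝ X] (f : X → ℝ) (v p : X) : ℝ :=
  fderiv ℝ f p v

/-- Second directional derivative. -/
def D2 {X : Type*} [NormedAddCommGroup X] [NormedSpace ℝ X] (f : X → ℝ) (v w p : X) : ℝ :=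
  fderiv ℝ (fun q => fderiv ℝ f q v) p w

def Dmn {d : ℕ} (RVV : Ed d → ℝ) (m n : Fin d) (k : Ed d) : ℝ :=
  -∫ s in Set.Ioi (0:ℝ), pd (pd RVV n) m (s • k)

def Dco {d : ℕ} (RSS : Ed d → ℝ) (k : Ed d) : ℝ := ∫ s in Set.Ioi (0:ℝ), RSS (s • k)

def Dmcoef {d : ℕ} (RSV : Ed d → ℝ) (m : Fin d) (k : Ed d) : ℝ :=
  ∫ s in Set.Ioi (0:ℝ), pd RSV m (s • k)

def Emcoef {d : ℕ} (RVV : Ed d → ℝ) (m : Fin d) (k : Ed d) : ℝ :=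
  -∫ s in Set.Ioi (0:ℝ), s * lap (pd RVV m) (s • k)

def Ecoef {d : ℕ} (RSV : Ed d → ℝ) (k : Ed d) : ℝ :=
  ∫ s in Set.Ioi (0:ℝ), s * lap RSV (s • k)

/-- The generator `𝓛` of the limiting diffusion `(X,K,Z)`. -/
def Lgen {d : ℕ} (RVV RSV RSS : Ed d → ℝ) (f : Qd d → ℝ) (p : Qd d) : ℝ :=
  (∑ m, ∑ n, Dmn RVV m n p.2.1 * D2 f (ekd m) (ekd n) p)
  + (∑ m, (Dmcoef RSV m p.2.1 + Dmcoef RSV m (-p.2.1)) * D2 f (ekd m) ezd p)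
  + Dco RSS p.2.1 * D2 f ezd ezd p
  + (∑ m, Emcoef RVV m p.2.1 * D1 f (ekd m) p)
  + Ecoef RSV p.2.1 * D1 f ezd p
  - ∑ m, p.2.1 m * D1 f (exd m) p

/-- Sup norm of `f` together with its derivatives up to order `n`. -/
def normC {X : Type*} [NormedAddCommGroup X] [NormedSpace ℝ X]
    {Y : Type*} [NormedAddCommGroup Y] [NormedSpace ℝ Y] (n : ℕ) (f : X → Y) : ℝ :=
  ⨆ q : Fin (n+1) × X, ‖iteratedFDeriv ℝ (q.1 : ℕ) f q.2‖

/-- Sup norm. -/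
def supAbs {α : Type*} (f : α → ℝ) : ℝ := ⨆ v, |f v|

/-- The diffusion matrix given by an integral over the whole line. -/
def Dfull {d : ℕ} (R : Ed d → ℝ) (m n : Fin d) (k : Ed d) : ℝ :=
  -(1/2) * ∫ s : ℝ, pd (pd R n) m (s • k)

abbrev Jet (d : ℕ) : Type := (ℝ × ℝ) × (Fin d → ℝ × ℝ) × (Fin d → Fin d → ℝ × ℝ)

/-- The field `(V,S)` together with its first and second derivatives at `x`. -/
def jet2 {d : ℕ} (Vf Sf : Ed d → ℝ) (x : Ed d) : Jet d :=
  ((Vf x, Sf x), fun i => (pd Vf i x, pd Sf i x),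
    fun i j => (pd (pd Vf i) j x, pd (pd Sf i) j x))

/-- The σ-algebra generated by the process `(X,K,Z)` up to time `t`. -/
def pastSigma {d : ℕ} {Ω : Type*} (X K : Ω → ℝ → Ed d) (Z : Ω → ℝ → ℝ) (t : ℝ) :
    MeasurableSpace Ω :=
  ⨆ s ∈ Set.Iic t, MeasurableSpace.comap (fun ω => (X ω s, K ω s, Z ω s)) inferInstance

/-- the diffusion matrix `D(k)` annihilates `k`, i.e. the limiting
momentum process is a diffusion on the sphere `{|k| = const}`. -/
theorem statement10
    {d : ℕ} (hd : 1 ≤ d) (R : Ed d → ℝ) (hR : ContDiff ℝ 2 R)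
    (hint : ∀ khat : Ed d, ‖khat‖ = 1 → ∀ m n : Fin d,
      MeasureTheory.Integrable (fun s : ℝ => pd (pd R n) m (s • khat)))
    (hdecay : ∀ khat : Ed d, ‖khat‖ = 1 → ∀ n : Fin d,
      Tendsto (fun s : ℝ => pd R n (s • khat)) atTop (nhds 0) ∧
      Tendsto (fun s : ℝ => pd R n (s • khat)) atBot (nhds 0)) :
    ∀ k : Ed d, k ≠ 0 → ∀ n : Fin d, ∑ m, Dfull R n m k * k m = 0 := by
  intro k hk n
  set e : Fin d → Ed d := fun i => EuclideanSpace.single i 1 with he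
  have hc : (0:ℝ) < ‖k‖ := norm_pos_iff.2 hk
  set khat : Ed d := ‖k‖⁻¹ • k with hkh
  have hkhat : ‖khat‖ = 1 := by
    rw [hkh, norm_smul, norm_inv, norm_norm, inv_mul_cancel₀ hc.ne']
  have hscale : ∀ s : ℝ, (‖k‖ * s) • khat = s • k := by
    intro s
    rw [hkh, smul_smul, mul_comm (‖k‖) s, mul_assoc, mul_inv_cancel₀ hc.ne', mul_one]
  have hfd : Differentiable ℝ (fderiv ℝ R) :=
    (hR.fderiv_right (m := 1) (by norm_num)).differentiable one_ne_zero
  -- pd (pd R n) m as second fderiv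
  have hA : ∀ (m n : Fin d) (x : Ed d),
      pd (pd R n) m x = fderiv ℝ (fderiv ℝ R) x (e m) (e n) := by
    intro m n x
    have : pd R n = fun y => fderiv ℝ R y (e n) := rfl
    rw [pd, this, fderiv_clm_apply (hfd x) (differentiableAt_const _)]
    simp [he]
  have hsym : ∀ (m n : Fin d) (x : Ed d),
      pd (pd R n) m x = pd (pd R m) n x := by
    intro m n x
    rw [hA, hA]
    exact (hR.contDiffAt.isSymmSndFDerivAt (by simp)) (e m) (e n)
  -- decomposition of k
  have hksum : (∑ m, k m • e m) = k := by
    ext j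
    have : (∑ m, k m • (EuclideanSpace.single m 1 : Ed d)) j
        = ∑ m, (k m • (EuclideanSpace.single m 1 : Ed d)) j := by
      rw [WithLp.ofLp_sum, Finset.sum_apply]
    rw [this]
    simp [EuclideanSpace.single_apply]
  -- integrability
  have hintk : ∀ m' n' : Fin d,
      Integrable (fun s : ℝ => pd (pd R n') m' (s • k)) := by
    intro m' n'
    have := (hint khat hkhat m' n').comp_mul_left' hc.ne'
    refine this.congr (Eventually.of_forall fun s => ?_)
    simp only [hscale]
  set g : ℝ → ℝ := fun s => pd R n (s • k) with hg
  set h : ℝ → ℝ := fun s => ∑ m, k m * pd (pd R n) m (s • k) with hh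
  have hderiv : ∀ s : ℝ, HasDerivAt g (h s) s := by
    intro s
    have h1 : HasDerivAt (fun s : ℝ => s • k) k s := by
      simpa using (hasDerivAt_id s).smul_const k
    have h2 : HasFDerivAt (fun y => fderiv ℝ R y (e n))
        ((fderiv ℝ (fderiv ℝ R) (s • k)).flip (e n)) (s • k) := by
      have := (hfd (s • k)).hasFDerivAt.clm_apply (hasFDerivAt_const (e n) (s • k))
      simpa using this
    have := h2.comp_hasDerivAt s h1
    convert this using 1
    · rfl
    · rfl
    · rfl
    change h s = fderiv ℝ (fderiv ℝ R) (s • k) k (e n)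
    calc h s = ∑ m, fderiv ℝ (fderiv ℝ R) (s • k) (k m • e m) (e n) := by
          refine Finset.sum_congr rfl fun m _ => ?_
          rw [hA]
          simp
      _ = fderiv ℝ (fderiv ℝ R) (s • k) (∑ m, k m • e m) (e n) := by
          rw [map_sum]
          simp [ContinuousLinearMap.sum_apply]
      _ = _ := by rw [hksum]
  have hhint : Integrable h := by
    refine integrable_finset_sum _ fun m _ => ?_
    exact (hintk m n).const_mul _
  have htop : Tendsto g atTop (nhds 0) := by
    have := ((hdecay khat hkhat n).1).comp (tendsto_id.atTop_mul_const hc)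
    refine this.congr fun s => ?_
    simp only [Function.comp, id]
    rw [mul_comm, hscale]
  have hbot : Tendsto g atBot (nhds 0) := by
    have := ((hdecay khat hkhat n).2).comp (tendsto_id.atBot_mul_const hc)
    refine this.congr fun s => ?_
    simp only [Function.comp, id]
    rw [mul_comm, hscale]
  have hI : (∫ s : ℝ, h s) = 0 := by
    have h1 : (∫ s in Set.Iic (0:ℝ), h s) = g 0 - 0 :=
      integral_Iic_of_hasDerivAt_of_tendsto' (fun x _ => hderiv x)
        hhint.integrableOn hbot
    have h2 : (∫ s in Set.Ioi (0:ℝ), h s) = 0 - g 0 :=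
      integral_Ioi_of_hasDerivAt_of_tendsto' (fun x _ => hderiv x)
        hhint.integrableOn htop
    rw [← intervalIntegral.integral_Iic_add_Ioi (b := (0:ℝ)) hhint.integrableOn hhint.integrableOn,
      h1, h2]
    ring
  calc ∑ m, Dfull R n m k * k m
      = ∑ m, -(1/2) * ∫ s : ℝ, k m * pd (pd R n) m (s • k) := by
        refine Finset.sum_congr rfl fun m _ => ?_
        rw [Dfull, integral_const_mul]
        have : (fun s : ℝ => pd (pd R m) n (s • k))
            = fun s : ℝ => pd (pd R n) m (s • k) := by
          funext s; rw [hsym]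
        rw [this]; ring
    _ = -(1/2) * ∫ s : ℝ, h s := by
        rw [← Finset.mul_sum, ← integral_finset_sum _ (fun m _ => (hintk m n).const_mul _)]
    _ = 0 := by rw [hI]; ring
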